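/- Let α ∈ (0,1) be irrational with convergents p_k/q_k, and let k ≥ 1. Then for every integer j with 1 ≤ j < q_{k+1}/3, the fractional part {jα} does not belong to the interval [1/(3q_k), 2/(3q_k)]. -/

import Mathlib

/-- Complete quotients of the continued fraction of `α ∈ (0,1)`:
`cfQuot α 0 = 1/α`, and `cfQuot α (k+1) = 1/(cfQuot α k - ⌊cfQuot α k⌋)`.
The digit `a_{k+1}` is `⌊cfQuot α k⌋`. -/
noncomputable def cfQuot (α : ℝ) : ℕ → ℝ
  | 0 => 1 / α
  | k + 1 => 1 / (cfQuot α k - ⌊cfQuot α k⌋)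

/-- The `k`-th continued fraction digit `a_k` of `α ∈ (0,1)`, for `k ≥ 1`. -/
noncomputable def cfDigit (α : ℝ) (k : ℕ) : ℤ := ⌊cfQuot α (k - 1)⌋

/-- Numerators of the convergents: `p_0 = 0`, `p_1 = 1`,
`p_{k+2} = a_{k+2} p_{k+1} + p_k`. -/
noncomputable def cfP (α : ℝ) : ℕ → ℤ
  | 0 => 0
  | 1 => 1
  | k + 2 => cfDigit α (k + 2) * cfP α (k + 1) + cfP α k

/-- Denominators of the convergents: `q_0 = 1`, `q_1 = a_1`,
`q_{k+2} = a_{k+2} q_{k+1} + q_k`. -/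
noncomputable def cfQ (α : ℝ) : ℕ → ℤ
  | 0 => 1
  | 1 => cfDigit α 1
  | k + 2 => cfDigit α (k + 2) * cfQ α (k + 1) + cfQ α k

/-! The `k`-th convergent satisfies `|q_k α - p_k| < 1/q_{k+1}`, so for `j < q_{k+1}/3` the number
`q_k · jα` lies within `1/3` of the integer `j p_k`. Hence `{jα}` lies within `1/(3 q_k)` of a
multiple of `1/q_k`, which rules out the middle third `[1/(3 q_k), 2/(3 q_k)]` of the gap
between two consecutive multiples. -/

lemma fract_notMem_Icc_of_abs_mul_sub_lt {x : ℝ} {p q : ℤ} (hq : 0 < q)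
    (h : |q * x - p| < 1 / 3) :
    Int.fract x ∉ Set.Icc (1 / (3 * (q : ℝ))) (2 / (3 * (q : ℝ))) := by
  rintro ⟨hlo, hhi⟩
  have hq' : (0 : ℝ) < q := by exact_mod_cast hq
  rw [div_le_iff₀' (by positivity)] at hlo
  rw [le_div_iff₀' (by positivity)] at hhi
  rw [Int.fract] at hlo hhi
  obtain ⟨hl, hr⟩ := abs_lt.mp h
  have hpos : (0 : ℝ) < p - q * ⌊x⌋ := by linarith
  have hlt : (p - q * ⌊x⌋ : ℝ) < 1 := by linarith
  have hpos' : 0 < p - q * ⌊x⌋ := by exact_mod_cast hpos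
  have hlt' : p - q * ⌊x⌋ < 1 := by exact_mod_cast hlt
  omega

section ContinuedFraction

variable {α : ℝ}

lemma cfDigit_succ (k : ℕ) : cfDigit α (k + 1) = ⌊cfQuot α k⌋ := rfl

lemma cfQuot_succ (k : ℕ) : cfQuot α (k + 1) = (Int.fract (cfQuot α k))⁻¹ := by
  rw [cfQuot, one_div, Int.fract]

lemma irrational_cfQuot (hirr : Irrational α) (k : ℕ) : Irrational (cfQuot α k) := by
  induction k with
  | zero => simpa [cfQuot] using hirr.inv
  | succ k ih => rw [cfQuot_succ, Int.fract]; exact (ih.sub_intCast _).inv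

lemma one_lt_cfQuot (hirr : Irrational α) (h0 : 0 < α) (h1 : α < 1) (k : ℕ) :
    1 < cfQuot α k := by
  cases k with
  | zero => exact one_lt_one_div h0 h1
  | succ k =>
    rw [cfQuot_succ, ← one_div]
    exact one_lt_one_div (Int.fract_pos.mpr ((irrational_cfQuot hirr k).ne_int _))
      (Int.fract_lt_one _)

lemma cfDigit_succ_lt_cfQuot (hirr : Irrational α) (k : ℕ) :
    (cfDigit α (k + 1) : ℝ) < cfQuot α k :=
  (Int.floor_le _).lt_of_ne ((irrational_cfQuot hirr k).ne_int _).symm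

lemma one_le_cfDigit_succ (hirr : Irrational α) (h0 : 0 < α) (h1 : α < 1) (k : ℕ) :
    1 ≤ cfDigit α (k + 1) :=
  Int.le_floor.mpr (by exact_mod_cast (one_lt_cfQuot hirr h0 h1 k).le)

lemma one_le_cfQ (hirr : Irrational α) (h0 : 0 < α) (h1 : α < 1) : ∀ k, 1 ≤ cfQ α k
  | 0 => le_rfl
  | 1 => one_le_cfDigit_succ hirr h0 h1 0
  | k + 2 => by
    have := one_le_cfDigit_succ hirr h0 h1 (k + 1)
    have := one_le_cfQ hirr h0 h1 (k + 1)
    have := one_le_cfQ hirr h0 h1 k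
    rw [cfQ]
    nlinarith

lemma cfP_mul_cfQ_sub_cfQ_mul_cfP (α : ℝ) (k : ℕ) :
    cfP α (k + 1) * cfQ α k - cfQ α (k + 1) * cfP α k = (-1) ^ k := by
  induction k with
  | zero => simp [cfP, cfQ]
  | succ k ih =>
    rw [cfP, cfQ]
    linear_combination -ih

lemma cfQuot_sub_cfDigit_mul_cfQuot_succ (hirr : Irrational α) (k : ℕ) :
    (cfQuot α k - cfDigit α (k + 1)) * cfQuot α (k + 1) = 1 := by
  rw [cfDigit_succ, cfQuot_succ, ← Int.fract]
  exact mul_inv_cancel₀ (Int.fract_pos.mpr ((irrational_cfQuot hirr k).ne_int _)).ne'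

/-- `α = (p_{k+1} t + p_k) / (q_{k+1} t + q_k)` with `t = cfQuot α (k + 1)` the complete
quotient, written without division. -/
lemma mul_cfQ_cfQuot_add_cfQ (hirr : Irrational α) (k : ℕ) :
    α * (cfQ α (k + 1) * cfQuot α (k + 1) + cfQ α k) =
      cfP α (k + 1) * cfQuot α (k + 1) + cfP α k := by
  induction k with
  | zero =>
    have hα : α * cfQuot α 0 = 1 := by rw [cfQuot, mul_one_div_cancel hirr.ne_zero]
    have hrel := cfQuot_sub_cfDigit_mul_cfQuot_succ hirr 0
    simp only [cfQ, cfP, Int.cast_one, Int.cast_zero]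
    linear_combination -α * hrel + cfQuot α 1 * hα
  | succ k ih =>
    have hrel := cfQuot_sub_cfDigit_mul_cfQuot_succ hirr (k + 1)
    rw [cfP, cfQ]
    push_cast
    linear_combination cfQuot α (k + 2) * ih - (α * cfQ α (k + 1) - cfP α (k + 1)) * hrel

lemma abs_cfQ_mul_sub_cfP_lt (hirr : Irrational α) (h0 : 0 < α) (h1 : α < 1) {k : ℕ}
    (hk : 1 ≤ k) : |cfQ α k * α - cfP α k| < 1 / (cfQ α (k + 1) : ℝ) := by
  obtain ⟨k, rfl⟩ := Nat.exists_eq_add_of_le' hk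
  set t := cfQuot α (k + 1)
  set D : ℝ := cfQ α (k + 1) * t + cfQ α k
  have hq₀ : (1 : ℝ) ≤ cfQ α k := by exact_mod_cast one_le_cfQ hirr h0 h1 k
  have hq₁ : (1 : ℝ) ≤ cfQ α (k + 1) := by exact_mod_cast one_le_cfQ hirr h0 h1 (k + 1)
  have hq₂ : (1 : ℝ) ≤ cfQ α (k + 2) := by exact_mod_cast one_le_cfQ hirr h0 h1 (k + 2)
  have hD₀ : 0 < D := by have := one_lt_cfQuot hirr h0 h1 (k + 1); positivity
  have hD : cfQ α (k + 2) < D := by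
    have := cfDigit_succ_lt_cfQuot hirr (k + 1)
    rw [cfQ]
    push_cast
    nlinarith
  have hdet : (cfP α (k + 1) * cfQ α k - cfQ α (k + 1) * cfP α k : ℝ) = (-1) ^ k := by
    exact_mod_cast cfP_mul_cfQ_sub_cfQ_mul_cfP α k
  have herr : (cfQ α (k + 1) * α - cfP α (k + 1)) * D = (-1) ^ (k + 1) := by
    linear_combination (cfQ α (k + 1) : ℝ) * mul_cfQ_cfQuot_add_cfQ hirr k - hdet
  have habs : |cfQ α (k + 1) * α - cfP α (k + 1)| = 1 / D := by
    refine eq_one_div_of_mul_eq_one_left ?_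
    rw [← abs_of_pos hD₀, ← abs_mul, herr, abs_pow, abs_neg, abs_one, one_pow]
  rw [habs]
  exact one_div_lt_one_div_of_lt (by positivity) hD

end ContinuedFraction

/-- For irrational `α ∈ (0,1)` with convergents `p_k/q_k` and `k ≥ 1`, every integer `j` with
`1 ≤ j < q_{k+1}/3` satisfies `{jα} ∉ [1/(3 q_k), 2/(3 q_k)]`. -/
theorem stmt_3 (α : ℝ) (hirr : Irrational α) (h0 : 0 < α) (h1 : α < 1) :
    ∀ k : ℕ, 1 ≤ k → ∀ j : ℕ, 1 ≤ j → (j : ℝ) < (cfQ α (k + 1) : ℝ) / 3 →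
      Int.fract ((j : ℝ) * α) ∉
        Set.Icc (1 / (3 * (cfQ α k : ℝ))) (2 / (3 * (cfQ α k : ℝ))) := by
  intro k hk j _ hj
  have hq : 0 < cfQ α k := one_le_cfQ hirr h0 h1 k
  have hQ : (0 : ℝ) < cfQ α (k + 1) := by exact_mod_cast one_le_cfQ hirr h0 h1 (k + 1)
  refine fract_notMem_Icc_of_abs_mul_sub_lt (p := j * cfP α k) hq ?_
  calc |cfQ α k * (j * α) - ((j * cfP α k : ℤ) : ℝ)| = |(j : ℝ) * (cfQ α k * α - cfP α k)| := by
        congr 1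
        push_cast
        ring
    _ = j * |cfQ α k * α - cfP α k| := by rw [abs_mul, Nat.abs_cast]
    _ ≤ j * (1 / cfQ α (k + 1)) := by gcongr; exact (abs_cfQ_mul_sub_cfP_lt hirr h0 h1 hk).le
    _ < 1 / 3 := by rw [mul_one_div, div_lt_iff₀ hQ]; linarith
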